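/- arXiv:2004.04215 — 6 statements merged into one kernel-verified Lean document; each statement's English description precedes it below -/
import Mathlib

section
/- Define a sequence (a_n) by a_0 = 1, a_1 = 1, a_2 = 1, and a_n = a_{n-1} - z^2 a_{n-3} for n ≥ 3. Then under the substitution z^2 = t(1-t)^2 with t ≠ 1/3 and 0 < t < 4/3, a_n = (1/(3t-1)) [ -r1^{n+1} + ((3t+W)/(2W)) r2^{n+1} - ((3t-W)/(2W)) r3^{n+1} ], where W = sqrt(4t-3t^2), r1 = 1-t, r2 = (t+W)/2, r3 = (t-W)/2. -/
/-!
The recurrence `aₙ = aₙ₋₁ - c aₙ₋₃` is linear of order three with characteristic polynomial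
`X³ - X² + c`. For `c = t(1-t)²` it factors as `(X - (1-t))(X² - tX - t(1-t))`, whose roots are
`1 - t` and `(t ± W)/2` with `W² = 4t - 3t²`. So `n ↦ rⁿ⁺¹` solves the recurrence for each root `r`,
hence so does the closed form, and it is pinned down by checking that its first three terms are `1`.
-/

open Real

namespace LinearRecurrence

variable {R : Type*} [CommRing R]

def deutsch (c : R) : LinearRecurrence R := ⟨3, ![-c, 0, 1]⟩

theorem deutsch_isSolution_iff {c : R} {u : ℕ → R} :
    (deutsch c).IsSolution u ↔ ∀ n, u (n + 3) = u (n + 2) - c * u n := by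
  refine forall_congr' fun n => ?_
  change u (n + 3) = ∑ i : Fin 3, ![-c, 0, 1] i * u (n + i) ↔ _
  simp only [Fin.sum_univ_three, Matrix.cons_val_zero, Matrix.cons_val_one, Matrix.cons_val_two,
    Matrix.tail_cons, Matrix.head_cons, Fin.val_zero, Fin.val_one, Fin.val_two]
  constructor <;> intro h <;> linear_combination h

theorem deutsch_isSolution_pow_succ {c r : R} (hr : r ^ 3 = r ^ 2 - c) :
    (deutsch c).IsSolution fun n => r ^ (n + 1) :=
  deutsch_isSolution_iff.2 fun n => by linear_combination r ^ (n + 1) * hr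

end LinearRecurrence

open LinearRecurrence

section ClosedForm

variable {K : Type*} [Field K] [CharZero K] {t W : K}

theorem cube_half_add_eq_sq_sub (hW : W ^ 2 = 4 * t - 3 * t ^ 2) :
    ((t + W) / 2) ^ 3 = ((t + W) / 2) ^ 2 - t * (1 - t) ^ 2 := by
  linear_combination ((3 * t + W) / 8 - 1 / 4) * hW

/-- The paper's closed form, with `W` standing for `√(4t - 3t²)`. -/
noncomputable def deutschClosedForm (t W : K) (n : ℕ) : K :=
  1 / (3 * t - 1) *
    (-(1 - t) ^ (n + 1) + (3 * t + W) / (2 * W) * ((t + W) / 2) ^ (n + 1)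
      - (3 * t - W) / (2 * W) * ((t - W) / 2) ^ (n + 1))

theorem deutschClosedForm_isSolution (hW : W ^ 2 = 4 * t - 3 * t ^ 2) :
    (deutsch (t * (1 - t) ^ 2)).IsSolution (deutschClosedForm t W) := by
  have h₁ := deutsch_isSolution_pow_succ (c := t * (1 - t) ^ 2) (r := 1 - t) (by ring)
  have h₂ := deutsch_isSolution_pow_succ (cube_half_add_eq_sq_sub hW)
  have h₃ := deutsch_isSolution_pow_succ
    (cube_half_add_eq_sq_sub (t := t) (W := -W) (by rw [neg_sq, hW]))
  rw [deutsch_isSolution_iff] at h₁ h₂ h₃ ⊢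
  intro n
  simp only [deutschClosedForm, ← sub_eq_add_neg] at h₁ h₂ h₃ ⊢
  linear_combination (-(1 / (3 * t - 1))) * h₁ n
    + 1 / (3 * t - 1) * ((3 * t + W) / (2 * W)) * h₂ n
    - 1 / (3 * t - 1) * ((3 * t - W) / (2 * W)) * h₃ n

theorem deutschClosedForm_eq_one_of_lt_three (hW : W ^ 2 = 4 * t - 3 * t ^ 2) (hW₀ : W ≠ 0)
    (ht : 3 * t - 1 ≠ 0) {n : ℕ} (hn : n < 3) : deutschClosedForm t W n = 1 := by
  interval_cases n <;> simp only [deutschClosedForm] <;> field_simp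
  · ring
  · linear_combination W * hW / 2
  · linear_combination 3 * t * W * hW / 2

end ClosedForm

/-- The sequence a₀ = a₁ = a₂ = 1, aₙ = aₙ₋₁ - z²aₙ₋₃, with
z² = t(1-t)², 0 < t < 4/3, t ≠ 1/3, has the closed form
aₙ = (1/(3t-1))[-r₁ⁿ⁺¹ + ((3t+W)/(2W)) r₂ⁿ⁺¹ - ((3t-W)/(2W)) r₃ⁿ⁺¹]. -/
theorem deutsch_sequence_closed_form (t z : ℝ) (ht : 0 < t) (ht' : t < 4/3)
    (ht3 : t ≠ 1/3) (hz : z ^ 2 = t * (1 - t) ^ 2)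
    (a : ℕ → ℝ) (h0 : a 0 = 1) (h1 : a 1 = 1) (h2 : a 2 = 1)
    (hrec : ∀ n, 3 ≤ n → a n = a (n - 1) - z ^ 2 * a (n - 3)) :
    ∀ n : ℕ,
      a n =
        (1 / (3 * t - 1)) *
          (-(1 - t) ^ (n + 1)
            + ((3 * t + Real.sqrt (4 * t - 3 * t ^ 2)) / (2 * Real.sqrt (4 * t - 3 * t ^ 2)))
              * ((t + Real.sqrt (4 * t - 3 * t ^ 2)) / 2) ^ (n + 1)
            - ((3 * t - Real.sqrt (4 * t - 3 * t ^ 2)) / (2 * Real.sqrt (4 * t - 3 * t ^ 2)))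
              * ((t - Real.sqrt (4 * t - 3 * t ^ 2)) / 2) ^ (n + 1)) := by
  have hpos : 0 < 4 * t - 3 * t ^ 2 := by nlinarith
  have hW := sq_sqrt hpos.le
  have ha : (deutsch (t * (1 - t) ^ 2)).IsSolution a :=
    deutsch_isSolution_iff.2 fun n => hz ▸ hrec (n + 3) (by omega)
  have heq := ((deutsch _).eq_iff_eqOn_range_order _ _ ha (deutschClosedForm_isSolution hW)).2
    fun n hn => by
      replace hn : n < 3 := Finset.mem_range.1 hn
      rw [deutschClosedForm_eq_one_of_lt_three hW (sqrt_pos.2 hpos).ne'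
        (fun h => ht3 (by linarith)) hn]
      interval_cases n <;> assumption
  exact congrFun heq
end

section
/- The number of Deutsch paths from (0,0) to (2N+i, 2K+i) (for i ∈ {0,1}, N ≥ K ≥ 0) equals C(3N-K+i+1, N-K) - 3·C(3N-K+i, N-K-1). -/
/-!
Cutting off the last step of a Deutsch path of length `n + 1` ending at height `k` leaves a
Deutsch path of length `n` ending at `k - 1` or at `k + 2j + 1` with `j ≤ n`, so
`D(n+1, k) = D(n, k-1) + ∑ⱼ D(n, k+2j+1)`. Write `n = k + 2d`; the claim is
`D(n, k) = g(n + d, d)` with `g(m, d) = C(m+1, d) - 3 C(m, d-1)`. Since `g` obeys Pascal's rule,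
the sum over down-steps is a hockey-stick sum, and the recursion holds for `g`. The missing
up-step term at `k = 0` is matched by `g(3d-1, d) = 0`, i.e. `C(3d, d) = 3 C(3d-1, d-1)`:
the formula already vanishes at height `-1`.
-/

/-- A Deutsch step: up-step 1 or a down-step -1, -3, -5, .... -/
def DeutschStep (s : ℤ) : Prop := s = 1 ∨ ∃ j : ℕ, s = -(2 * j + 1)

/-- A Deutsch path: all steps are Deutsch steps and all partial sums (heights)
are nonnegative. -/
def IsDeutschPath (p : List ℤ) : Prop :=
  (∀ s ∈ p, DeutschStep s) ∧ ∀ m : ℕ, 0 ≤ (p.take m).sum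

/-- Number of Deutsch paths from (0,0) to (n,k). -/
noncomputable def deutschCount (n k : ℕ) : ℕ :=
  Nat.card {p : List ℤ // p.length = n ∧ IsDeutschPath p ∧ p.sum = (k : ℤ)}

open Finset

lemma DeutschStep.le_one {s : ℤ} (h : DeutschStep s) : s ≤ 1 := by
  rcases h with h | ⟨j, h⟩ <;> omega

lemma isDeutschPath_nil : IsDeutschPath [] := ⟨by simp, by simp⟩

lemma IsDeutschPath.sum_nonneg {p : List ℤ} (h : IsDeutschPath p) : 0 ≤ p.sum := by
  simpa using h.2 p.length

lemma IsDeutschPath.sum_le_length {p : List ℤ} (h : IsDeutschPath p) : p.sum ≤ p.length := by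
  simpa using List.sum_le_card_nsmul p 1 fun s hs => (h.1 s hs).le_one

lemma sum_take_append_singleton (q : List ℤ) (s : ℤ) (m : ℕ) :
    ((q ++ [s]).take m).sum = if m ≤ q.length then (q.take m).sum else q.sum + s := by
  split_ifs with hm
  · rw [List.take_append_of_le_length hm]
  · rw [List.take_of_length_le (by simp; omega), List.sum_append, List.sum_singleton]

lemma isDeutschPath_append_singleton {q : List ℤ} {s : ℤ} :
    IsDeutschPath (q ++ [s]) ↔ IsDeutschPath q ∧ DeutschStep s ∧ 0 ≤ q.sum + s := by
  simp only [IsDeutschPath, List.forall_mem_append, List.forall_mem_singleton,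
    sum_take_append_singleton]
  constructor
  · rintro ⟨⟨hq, hs⟩, hsum⟩
    refine ⟨⟨hq, fun m => ?_⟩, hs, by simpa using hsum (q.length + 1)⟩
    rcases le_or_gt m q.length with hm | hm
    · simpa [hm] using hsum m
    · simpa [List.take_of_length_le hm.le] using hsum q.length
  · rintro ⟨⟨hq, hpre⟩, hs, hsum⟩
    exact ⟨⟨hq, hs⟩, fun m => by split_ifs <;> simp_all⟩

def deutschPaths (n : ℕ) (k : ℤ) : Set (List ℤ) :=
  {p | p.length = n ∧ IsDeutschPath p ∧ p.sum = k}

lemma deutschPaths_eq_empty {n : ℕ} {k : ℤ} (hk : k < 0 ∨ n < k) : deutschPaths n k = ∅ := by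
  refine Set.eq_empty_of_forall_notMem fun p ⟨hlen, hp, hsum⟩ => ?_
  have := hp.sum_nonneg
  have := hp.sum_le_length
  omega

/-- A longer down-step cannot end a Deutsch path of length `n + 1`: it would start above
height `n`. -/
def lastStep {n : ℕ} : Option (Fin (n + 1)) → ℤ
  | none => 1
  | some j => -(2 * j + 1)

lemma lastStep_injective {n : ℕ} : Function.Injective (lastStep (n := n)) := by
  rintro (_ | i) (_ | j) h <;> simp [lastStep, Fin.ext_iff] at h ⊢ <;> omega

lemma deutschStep_lastStep {n : ℕ} (o : Option (Fin (n + 1))) : DeutschStep (lastStep o) := by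
  cases o with
  | none => exact Or.inl rfl
  | some j => exact Or.inr ⟨j, rfl⟩

section AppendLastStep

variable (n : ℕ) {k : ℤ} (hk : 0 ≤ k)

def appendLastStep :
    (Σ o : Option (Fin (n + 1)), deutschPaths n (k - lastStep o)) → deutschPaths (n + 1) k :=
  fun x => ⟨x.2.1 ++ [lastStep x.1], by simp [x.2.2.1],
    isDeutschPath_append_singleton.2 ⟨x.2.2.2.1, deutschStep_lastStep x.1, by simp [x.2.2.2.2, hk]⟩,
    by simp [x.2.2.2.2]⟩

lemma appendLastStep_injective : Function.Injective (appendLastStep n hk) := by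
  rintro ⟨o, q⟩ ⟨o', q'⟩ h
  obtain ⟨hq, ho⟩ := List.append_singleton_inj.1 (congrArg Subtype.val h)
  exact Sigma.subtype_ext (lastStep_injective ho) hq

lemma appendLastStep_surjective : Function.Surjective (appendLastStep n hk) := by
  rintro ⟨p, hlen, hp, hsum⟩
  obtain ⟨q, s, rfl⟩ : ∃ q s, p = q ++ [s] := by
    rcases List.eq_nil_or_concat p with rfl | ⟨q, s, rfl⟩
    · simp at hlen
    · exact ⟨q, s, List.concat_eq_append⟩
  obtain ⟨hq, hs, -⟩ := isDeutschPath_append_singleton.1 hp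
  have hqlen : q.length = n := by simpa using hlen
  have hqsum : q.sum + s = k := by simpa using hsum
  obtain ⟨o, rfl⟩ : ∃ o : Option (Fin (n + 1)), lastStep o = s := by
    rcases hs with rfl | ⟨j, rfl⟩
    · exact ⟨none, rfl⟩
    · have := hq.sum_le_length
      exact ⟨some ⟨j, by omega⟩, rfl⟩
  exact ⟨⟨o, q, hqlen, hq, by omega⟩, rfl⟩

end AppendLastStep

instance finite_deutschPaths (n : ℕ) (k : ℤ) : Finite (deutschPaths n k) := by
  induction n generalizing k with
  | zero =>
    refine (Set.finite_singleton []).subset (fun p hp => ?_) |>.to_subtype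
    exact List.length_eq_zero_iff.1 hp.1
  | succ n ih =>
    rcases lt_or_ge k 0 with hk | hk
    · rw [deutschPaths_eq_empty (Or.inl hk)]
      infer_instance
    · exact Finite.of_surjective _ (appendLastStep_surjective n hk)

lemma card_deutschPaths_succ (n : ℕ) {k : ℤ} (hk : 0 ≤ k) :
    Nat.card (deutschPaths (n + 1) k) = Nat.card (deutschPaths n (k - 1)) +
      ∑ j ∈ range (n + 1), Nat.card (deutschPaths n (k + (2 * j + 1))) := by
  rw [← Nat.card_congr (Equiv.ofBijective _
      ⟨appendLastStep_injective n hk, appendLastStep_surjective n hk⟩),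
    Nat.card_sigma, Fintype.sum_option,
    ← Fin.sum_univ_eq_sum_range (fun j => Nat.card (deutschPaths n (k + (2 * j + 1))))]
  simp only [lastStep, sub_neg_eq_add]

lemma deutschCount_eq_card (n k : ℕ) : deutschCount n k = Nat.card (deutschPaths n k) := rfl

lemma deutschCount_eq_zero_of_lt {n k : ℕ} (h : n < k) : deutschCount n k = 0 := by
  rw [deutschCount_eq_card, deutschPaths_eq_empty (Or.inr (by exact_mod_cast h))]
  simp

lemma deutschCount_zero_zero : deutschCount 0 0 = 1 := by
  have : deutschPaths 0 0 = {[]} := by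
    ext p
    constructor
    · rintro ⟨hp, -, -⟩
      exact List.length_eq_zero_iff.1 hp
    · rintro rfl
      exact ⟨rfl, isDeutschPath_nil, rfl⟩
  rw [deutschCount_eq_card, Nat.cast_zero, this, Nat.card_unique]

lemma deutschCount_succ (n k : ℕ) :
    deutschCount (n + 1) k = (if k = 0 then 0 else deutschCount n (k - 1)) +
      ∑ j ∈ range (n + 1), deutschCount n (k + 2 * j + 1) := by
  simp only [deutschCount_eq_card, card_deutschPaths_succ n (Int.natCast_nonneg k)]
  congr 1
  · split_ifs with hk
    · simp [hk, deutschPaths_eq_empty]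
    · congr
      omega

def deutschFormula : ℕ → ℕ → ℤ
  | _, 0 => 1
  | m, d + 1 => (m + 1).choose (d + 1) - 3 * m.choose d

lemma deutschFormula_succ_succ (m d : ℕ) :
    deutschFormula (m + 1) (d + 1) = deutschFormula m (d + 1) + deutschFormula m d := by
  cases d with
  | zero => simp [deutschFormula]; ring
  | succ d =>
    simp only [deutschFormula, Nat.choose_succ_succ (m + 1), Nat.choose_succ_succ m]
    push_cast
    ring

lemma sum_range_deutschFormula (n d : ℕ) :
    ∑ e ∈ range (d + 1), deutschFormula (n + e) e = deutschFormula (n + d + 1) d := by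
  induction d with
  | zero => simp [deutschFormula]
  | succ d ih =>
    rw [sum_range_succ, ih, ← add_assoc, deutschFormula_succ_succ (n + d + 1), add_comm]

lemma deutschFormula_three_mul_add_two (d : ℕ) : deutschFormula (3 * d + 2) (d + 1) = 0 := by
  have h := Nat.add_one_mul_choose_eq (3 * d + 2) d
  have : (3 * d + 2 + 1).choose (d + 1) = 3 * (3 * d + 2).choose d :=
    Nat.eq_of_mul_eq_mul_right d.succ_pos (by rw [← h, Nat.succ_eq_add_one]; ring)
  simp [deutschFormula, this]

theorem deutschCount_eq_deutschFormula (n k d : ℕ) (h : n = k + 2 * d) :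
    (deutschCount n k : ℤ) = deutschFormula (n + d) d := by
  induction n generalizing k d with
  | zero =>
    obtain ⟨rfl, rfl⟩ : k = 0 ∧ d = 0 := by omega
    simp [deutschCount_zero_zero, deutschFormula]
  | succ n ih =>
    have hup : ((if k = 0 then 0 else deutschCount n (k - 1) : ℕ) : ℤ) =
        deutschFormula (n + d) d := by
      rcases k with _ | k
      · obtain ⟨d, rfl⟩ : ∃ e, d = e + 1 := ⟨d - 1, by omega⟩
        rw [if_pos rfl, Nat.cast_zero, show n + (d + 1) = 3 * d + 2 by omega,
          deutschFormula_three_mul_add_two]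
      · simpa using ih k d (by omega)
    have hdown : ∑ j ∈ range (n + 1), (deutschCount n (k + 2 * j + 1) : ℤ) =
        ∑ e ∈ range d, deutschFormula (n + e) e := by
      rw [← sum_range_add_sum_Ico _ (show d ≤ n + 1 by omega),
        sum_eq_zero (s := Ico d (n + 1)) fun j hj => by
          rw [deutschCount_eq_zero_of_lt (by rw [mem_Ico] at hj; omega), Nat.cast_zero],
        add_zero, ← sum_range_reflect (fun e => deutschFormula (n + e) e)]
      refine sum_congr rfl fun j hj => ?_
      rw [mem_range] at hj
      exact ih (k + 2 * j + 1) (d - 1 - j) (by omega)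
    rw [deutschCount_succ, Nat.cast_add, hup, Nat.cast_sum, hdown, add_comm, ← sum_range_succ,
      sum_range_deutschFormula, add_right_comm]

theorem deutschCount_closed_form_general (N K i : ℕ) (hK : K ≤ N) :
    (deutschCount (2 * N + i) (2 * K + i) : ℤ) =
      ((3 * N - K + i + 1).choose (N - K) : ℤ) -
        3 * (if K + 1 ≤ N then ((3 * N - K + i).choose (N - K - 1) : ℤ) else 0) := by
  rw [deutschCount_eq_deutschFormula _ _ (N - K) (by omega),
    show 2 * N + i + (N - K) = 3 * N - K + i by omega]
  rcases h : N - K with _ | d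
  · simp [deutschFormula, show ¬K + 1 ≤ N by omega]
  · simp [deutschFormula, show K + 1 ≤ N by omega]

/-- The number of Deutsch paths from (0,0) to (2N+i, 2K+i)
(i ∈ {0,1}, K ≤ N) is C(3N-K+i+1, N-K) - 3·C(3N-K+i, N-K-1), the latter
binomial being 0 when its lower index N-K-1 is negative. -/
theorem deutschCount_closed_form (N K i : ℕ) (hi : i ≤ 1) (hK : K ≤ N) :
    (deutschCount (2 * N + i) (2 * K + i) : ℤ) =
      ((3 * N - K + i + 1).choose (N - K) : ℤ) -
        3 * (if K + 1 ≤ N then ((3 * N - K + i).choose (N - K - 1) : ℤ) else 0) :=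
  deutschCount_closed_form_general N K i hK
end

section
/- For any elements X, Y of a commutative ring and any m ≥ 0 (Girard–Waring formula): X^m + Y^m = Σ_{0 ≤ k ≤ m/2} (-1)^k · C(m-k, k) · (m/(m-k)) · (XY)^k · (X+Y)^{m-2k}, where for m ≥ 1 the coefficient C(m-k,k)·m/(m-k) is an integer. -/
/-!
Both sides are the Dickson polynomial `dickson 1 (X * Y) m` evaluated at `X + Y`: the power sums
`X ^ m + Y ^ m` obey its recurrence `p (m + 2) = (X + Y) * p (m + 1) - X * Y * p m`, and the
coefficients `m/(m-k) * C(m-k, k) = C(m-k, k) + C(m-k-1, k-1)` obey the matching recurrence by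
Pascal's rule.
-/

open Finset Polynomial

/-- `n/(n-k) * C(n-k, k)`, an exact quotient by `Nat.sub_dvd_mul_choose`; it is `0` whenever
`n < 2 * k`, including the junk value `0 / 0` at `k = n`. -/
def dicksonCoeff (n k : ℕ) : ℕ := n * (n - k).choose k / (n - k)

lemma dicksonCoeff_zero_right {n : ℕ} (hn : 1 ≤ n) : dicksonCoeff n 0 = 1 := by
  simp [dicksonCoeff, Nat.div_self hn]

lemma dicksonCoeff_eq_zero_of_lt {n k : ℕ} (h : n < 2 * k) : dicksonCoeff n k = 0 := by
  simp [dicksonCoeff, Nat.choose_eq_zero_of_lt (by omega : n - k < k)]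

lemma Nat.mul_choose_sub_succ (n k : ℕ) :
    n * (n - (k + 1)).choose (k + 1) =
      (n - (k + 1)) * ((n - (k + 1)).choose (k + 1) + (n - (k + 2)).choose k) := by
  rcases lt_or_ge n (k + 1) with h | h
  · simp [Nat.sub_eq_zero_of_le h.le]
  obtain ⟨j, rfl⟩ := Nat.exists_eq_add_of_le h
  rcases j with _ | j
  · simp
  · have := Nat.add_one_mul_choose_eq j k
    simp only [show k + 1 + (j + 1) - (k + 1) = j + 1 by omega,
      show k + 1 + (j + 1) - (k + 2) = j by omega]
    linarith

lemma dicksonCoeff_succ {n k : ℕ} (h : k + 1 < n) :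
    dicksonCoeff n (k + 1) = (n - (k + 1)).choose (k + 1) + (n - (k + 2)).choose k := by
  rw [dicksonCoeff, Nat.mul_choose_sub_succ, Nat.mul_div_cancel_left _ (by omega)]

lemma Nat.sub_dvd_mul_choose (n k : ℕ) : n - k ∣ n * (n - k).choose k := by
  rcases k with _ | k
  · simp
  · exact Dvd.intro _ (Nat.mul_choose_sub_succ n k).symm

lemma dicksonCoeff_add_two {n : ℕ} (hn : 1 ≤ n) (k : ℕ) :
    dicksonCoeff (n + 2) (k + 1) = dicksonCoeff (n + 1) (k + 1) + dicksonCoeff n k := by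
  rcases lt_or_ge n (2 * k) with h | h
  · simp only [dicksonCoeff_eq_zero_of_lt (by omega : n < 2 * k),
      dicksonCoeff_eq_zero_of_lt (by omega : n + 1 < 2 * (k + 1)),
      dicksonCoeff_eq_zero_of_lt (by omega : n + 2 < 2 * (k + 1))]
  rcases k with _ | k
  · rw [dicksonCoeff_succ (by omega), dicksonCoeff_succ (by omega), dicksonCoeff_zero_right hn]
    simp only [zero_add, Nat.choose_one_right, Nat.choose_zero_right]
    omega
  · rw [dicksonCoeff_succ (by omega), dicksonCoeff_succ (by omega), dicksonCoeff_succ (by omega)]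
    obtain ⟨j, rfl⟩ := Nat.exists_eq_add_of_le h
    simp only [show 2 * (k + 1) + j + 2 - (k + 2) = (k + j + 1) + 1 by omega,
      show 2 * (k + 1) + j + 2 - (k + 3) = k + j + 1 by omega,
      show 2 * (k + 1) + j + 1 - (k + 2) = k + j + 1 by omega,
      show 2 * (k + 1) + j + 1 - (k + 3) = k + j by omega,
      show 2 * (k + 1) + j - (k + 1) = k + j + 1 by omega,
      show 2 * (k + 1) + j - (k + 2) = k + j by omega,
      Nat.choose_succ_succ' (k + j + 1) (k + 1), Nat.choose_succ_succ' (k + j) k]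
    ring

section Sums

variable {S : Type*} [CommRing S] (a x : S)

lemma sum_range_dicksonCoeff_of_lt {n N : ℕ} (h : n < 2 * N) :
    ∑ k ∈ range N, (-1) ^ k * (dicksonCoeff n k : S) * a ^ k * x ^ (n - 2 * k) =
      ∑ k ∈ range (n / 2 + 1), (-1) ^ k * (dicksonCoeff n k : S) * a ^ k * x ^ (n - 2 * k) := by
  refine (sum_subset (range_subset_range.2 (by omega)) fun k _ hk => ?_).symm
  rw [mem_range] at hk
  simp [dicksonCoeff_eq_zero_of_lt (by omega : n < 2 * k)]

lemma mul_dicksonCoeff_mul_pow (n k : ℕ) :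
    x * ((dicksonCoeff n k : S) * x ^ (n - 2 * k)) = dicksonCoeff n k * x ^ (n + 1 - 2 * k) := by
  rcases lt_or_ge n (2 * k) with h | h
  · simp [dicksonCoeff_eq_zero_of_lt h]
  · rw [show n + 1 - 2 * k = n - 2 * k + 1 by omega, pow_succ]
    ring

lemma sum_range_dicksonCoeff_add_two {n : ℕ} (hn : 1 ≤ n) (N : ℕ) :
    ∑ k ∈ range (N + 1), (-1) ^ k * (dicksonCoeff (n + 2) k : S) * a ^ k * x ^ (n + 2 - 2 * k) =
      x * ∑ k ∈ range (N + 1),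
          (-1) ^ k * (dicksonCoeff (n + 1) k : S) * a ^ k * x ^ (n + 1 - 2 * k) -
        a * ∑ k ∈ range N, (-1) ^ k * (dicksonCoeff n k : S) * a ^ k * x ^ (n - 2 * k) := by
  have hterm : ∀ k, (-1) ^ (k + 1) * (dicksonCoeff (n + 2) (k + 1) : S) * a ^ (k + 1) *
      x ^ (n + 2 - 2 * (k + 1)) =
        x * ((-1) ^ (k + 1) * (dicksonCoeff (n + 1) (k + 1) : S) * a ^ (k + 1) *
          x ^ (n + 1 - 2 * (k + 1))) - a * ((-1) ^ k * (dicksonCoeff n k : S) * a ^ k *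
          x ^ (n - 2 * k)) := by
    intro k
    have hx := mul_dicksonCoeff_mul_pow x (n + 1) (k + 1)
    rw [show n + 1 + 1 - 2 * (k + 1) = n - 2 * k by omega] at hx
    rw [show n + 2 - 2 * (k + 1) = n - 2 * k by omega, dicksonCoeff_add_two hn, Nat.cast_add]
    linear_combination (-1) ^ k * a ^ (k + 1) * hx
  rw [sum_range_succ', sum_range_succ', mul_add, mul_sum, mul_sum, sum_congr rfl fun k _ => hterm k,
    sum_sub_distrib, dicksonCoeff_zero_right (by omega), dicksonCoeff_zero_right (by omega)]
  simp only [pow_zero, mul_zero, Nat.sub_zero, Nat.cast_one, mul_one, one_mul, pow_succ' x (n + 1)]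
  ring

end Sums

namespace Polynomial

theorem dickson_one_eq_sum {R : Type*} [CommRing R] (a : R) : ∀ {n : ℕ}, 1 ≤ n →
    dickson 1 a n =
      ∑ k ∈ range (n / 2 + 1), (-1) ^ k * (dicksonCoeff n k : R[X]) * C a ^ k * X ^ (n - 2 * k)
  | 1, _ => by simp [dicksonCoeff]
  | 2, _ => by
    rw [dickson_two]
    norm_num [sum_range_succ, dicksonCoeff, sub_eq_add_neg, mul_comm]
  | n + 3, _ => by
    rw [dickson_add_two, dickson_one_eq_sum a (n := n + 1 + 1) (by omega),
      dickson_one_eq_sum a (n := n + 1) (by omega),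
      show (n + 3) / 2 + 1 = (n + 1) / 2 + 1 + 1 by omega,
      ← sum_range_dicksonCoeff_of_lt (C a) X (by omega : n + 2 < 2 * ((n + 1) / 2 + 1 + 1))]
    exact (sum_range_dicksonCoeff_add_two (C a) X (n := n + 1) (by omega) _).symm

theorem dickson_one_eval_add_mul {R : Type*} [CommRing R] (x y : R) :
    ∀ n, (dickson 1 (x * y) n).eval (x + y) = x ^ n + y ^ n
  | 0 => by norm_num
  | 1 => by simp
  | n + 2 => by
    simp only [dickson_add_two, eval_sub, eval_mul, eval_X, eval_C,
      dickson_one_eval_add_mul x y (n + 1), dickson_one_eval_add_mul x y n]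
    ring

end Polynomial

/-- Girard–Waring: For X, Y in a commutative ring and m ≥ 1,
Xᵐ + Yᵐ = Σ_{0 ≤ k ≤ m/2} (-1)ᵏ C(m-k, k)·(m/(m-k))·(XY)ᵏ(X+Y)^{m-2k},
where each coefficient C(m-k,k)·m/(m-k) is an integer, i.e.
(m-k) ∣ m·C(m-k,k) for k ≤ m/2. -/
theorem girard_waring_power_sum {R : Type*} [CommRing R] (X Y : R) (m : ℕ)
    (hm : 1 ≤ m) :
    (∀ k ≤ m / 2, (m - k) ∣ m * (m - k).choose k) ∧
      X ^ m + Y ^ m =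
        ∑ k ∈ Finset.range (m / 2 + 1),
          (-1 : R) ^ k * ((m * (m - k).choose k / (m - k) : ℕ) : R) *
            (X * Y) ^ k * (X + Y) ^ (m - 2 * k) := by
  refine ⟨fun k _ => Nat.sub_dvd_mul_choose m k, ?_⟩
  rw [← dickson_one_eval_add_mul, dickson_one_eq_sum _ hm]
  simp [eval_finsetSum, dicksonCoeff]
end

section
/- For any elements X, Y of a commutative ring and any m ≥ 1: (X^m - Y^m)/(X - Y) = Σ_{0 ≤ k ≤ (m-1)/2} (-1)^k · C(m-1-k, k) · (XY)^k · (X+Y)^{m-1-2k}, where the left side is interpreted as the polynomial Σ_{j=0}^{m-1} X^j Y^{m-1-j}. -/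
/-!
Both sides are the Lucas sequence `U_m(X + Y, XY)`, defined by `U₀ = 0`, `U₁ = 1` and
`U_{n+2} = P U_{n+1} - Q U_n`. For the left side this is the factorisation
`t² - (X + Y) t + XY = (t - X)(t - Y)`, seen through the recursion
`∑_{i ≤ n} Xⁱ Y^{n-i} = Xⁿ + Y ∑_{i < n} Xⁱ Y^{n-1-i}`. The right side is the closed form
`U_{n+1}(P, Q) = ∑_{i + k = n} C(i, k) (-Q)ᵏ P^{i-k}`, whose recurrence is Pascal's rule.
-/

open Finset

section LucasSequence

variable {R : Type*} [CommRing R] (P Q : R)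

def lucasU : ℕ → R
  | 0 => 0
  | 1 => 1
  | n + 2 => P * lucasU (n + 1) - Q * lucasU n

@[simp] lemma lucasU_zero : lucasU P Q 0 = 0 := rfl

@[simp] lemma lucasU_one : lucasU P Q 1 = 1 := rfl

lemma lucasU_add_two (n : ℕ) :
    lucasU P Q (n + 2) = P * lucasU P Q (n + 1) - Q * lucasU P Q n := rfl

lemma lucasU_add_mul (x y : R) (n : ℕ) :
    lucasU (x + y) (x * y) n = ∑ i ∈ range n, x ^ i * y ^ (n - 1 - i) := by
  induction n using Nat.twoStepInduction with
  | zero => simp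
  | one => simp
  | more n ih₀ ih₁ =>
    rw [lucasU_add_two, ih₀, ih₁]
    simp only [Nat.add_sub_cancel, Nat.reduceSubDiff, geom_sum₂_succ_eq]
    ring

-- For `i ≤ k` the exponent `i - (k + 1)` is truncated, but then the binomial coefficient vanishes.
lemma choose_succ_mul_pow_sub_succ_mul (i k : ℕ) :
    (i.choose (k + 1) : R) * P ^ (i - (k + 1)) * P = i.choose (k + 1) * P ^ (i - k) := by
  rcases Nat.lt_or_ge k i with hki | hik
  · rw [mul_assoc, ← pow_succ, Nat.sub_add_eq, Nat.sub_add_cancel (by omega)]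
  · simp [Nat.choose_eq_zero_of_lt (Nat.lt_succ_of_le hik)]

lemma lucasU_succ_eq_sum_antidiagonal (n : ℕ) :
    lucasU P Q (n + 1) =
      ∑ p ∈ antidiagonal n, (-Q) ^ p.2 * (p.1.choose p.2 : R) * P ^ (p.1 - p.2) := by
  induction n using Nat.twoStepInduction with
  | zero => simp
  | one => simp [lucasU_add_two, Nat.antidiagonal_succ]
  | more n ih₀ ih₁ =>
    have pascal : ∀ p ∈ antidiagonal n,
        (-Q) ^ (p.2 + 1) * ((p.1 + 1).choose (p.2 + 1) : R) * P ^ (p.1 + 1 - (p.2 + 1)) =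
          P * ((-Q) ^ (p.2 + 1) * (p.1.choose (p.2 + 1) : R) * P ^ (p.1 - (p.2 + 1))) -
            Q * ((-Q) ^ p.2 * (p.1.choose p.2 : R) * P ^ (p.1 - p.2)) := by
      intro p _
      rw [Nat.choose_succ_succ, Nat.add_sub_add_right, Nat.cast_add]
      linear_combination -(-Q) ^ (p.2 + 1) * choose_succ_mul_pow_sub_succ_mul P p.1 p.2
    rw [lucasU_add_two, ih₀, ih₁, Nat.sum_antidiagonal_succ', Nat.sum_antidiagonal_succ,
      Nat.sum_antidiagonal_succ', sum_congr rfl pascal, sum_sub_distrib, ← mul_sum, ← mul_sum]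
    simp only [pow_zero, Nat.choose_zero_right, Nat.cast_one, mul_one, tsub_zero, one_mul,
      Nat.choose_zero_succ, Nat.cast_zero, mul_zero, zero_tsub, zero_add]
    ring

lemma lucasU_succ_eq_sum_range (n : ℕ) :
    lucasU P Q (n + 1) =
      ∑ k ∈ range (n / 2 + 1), (-Q) ^ k * ((n - k).choose k : R) * P ^ (n - 2 * k) := by
  rw [lucasU_succ_eq_sum_antidiagonal, ← Nat.sum_antidiagonal_swap,
    Nat.sum_antidiagonal_eq_sum_range_succ_mk]
  simp only [Prod.swap_prod_mk, Nat.sub_sub, ← two_mul]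
  refine (sum_subset (range_subset_range.mpr (by omega)) fun k _ hk => ?_).symm
  rw [Nat.choose_eq_zero_of_lt (by rw [mem_range] at hk; omega), Nat.cast_zero, mul_zero,
    zero_mul]

end LucasSequence

/-- Girard–Waring, second form: For X, Y in a commutative ring
and m ≥ 1, (Xᵐ - Yᵐ)/(X - Y), interpreted as Σ_{j=0}^{m-1} Xʲ Y^{m-1-j},
equals Σ_{0 ≤ k ≤ (m-1)/2} (-1)ᵏ C(m-1-k, k) (XY)ᵏ (X+Y)^{m-1-2k}. -/
theorem girard_waring_quotient {R : Type*} [CommRing R] (X Y : R) (m : ℕ)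
    (hm : 1 ≤ m) :
    ∑ j ∈ Finset.range m, X ^ j * Y ^ (m - 1 - j) =
      ∑ k ∈ Finset.range ((m - 1) / 2 + 1),
        (-1 : R) ^ k * ((m - 1 - k).choose k : R) *
          (X * Y) ^ k * (X + Y) ^ (m - 1 - 2 * k) := by
  obtain ⟨n, rfl⟩ := Nat.exists_eq_add_of_le' hm
  rw [← lucasU_add_mul, lucasU_succ_eq_sum_range, Nat.add_sub_cancel]
  refine sum_congr rfl fun k _ => ?_
  rw [neg_pow]
  ring
end

section
/- Let t = t(x) be the formal power series satisfying t(1-t)^2 = x with t(0) = 0. Then for n ≥ 1, [x^n] ( t(1+3t)/((1-t)(1-3t)^2) ) = [t^{n-1}] (1+3t)/((1-3t)(1-t)^{2n+2}) = Σ_{k≥0} 3^k ( C(3n-k, n-1-k) + 3·C(3n-1-k, n-2-k) ). -/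
/-!
Lagrange inversion for `x = t · v(t)`. Differentiating `H(t)` and using `t' · (X v)'(t) = 1`
gives `(n + 1) [xⁿ⁺¹] H(t) = [xⁿ] (H' / (X v)')(t)`, while integrating by parts gives
`[Xⁿ] H' v⁻ⁿ⁻¹ = (n + 1) [Xⁿ⁺¹] H (X v)' v⁻ⁿ⁻²`; so induction on `n`, for all `H` at once,
yields `[xⁿ] H(t) = [Xⁿ] H (X v)' v⁻ⁿ⁻¹`. For `v = (1 - X)²` and
`H = X(1 + 3X)/((1 - X)(1 - 3X)²)` the right-hand side is `[Xⁿ⁻¹] (1 + 3X)/((1 - 3X)(1 - X)²ⁿ⁺²)`,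
and multiplying out `1/(1 - 3X) = ∑ 3ᵏ Xᵏ` against `(1 + 3X)/(1 - X)²ⁿ⁺²` gives the binomial sum.
-/

open PowerSeries

namespace PowerSeries

section CommRing

variable {R : Type*} [CommRing R]

theorem constantCoeff_subst_of_constantCoeff_eq_zero {t : R⟦X⟧} (ht0 : constantCoeff t = 0)
    (f : R⟦X⟧) : constantCoeff (f.subst t) = constantCoeff f := by
  have h := constantCoeff_subst_eq_zero ht0 (f - C (constantCoeff f)) (by simp)
  rw [subst_sub (HasSubst.of_constantCoeff_zero' ht0), subst_C, map_sub, sub_eq_zero] at h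
  exact h

theorem derivative_mul_subst_derivative_eq_one {t v : R⟦X⟧} (ht0 : constantCoeff t = 0)
    (ht : t * v.subst t = X) : d⁄dX R t * (d⁄dX R (X * v)).subst t = 1 := by
  have ha := HasSubst.of_constantCoeff_zero' ht0
  have h := congrArg (d⁄dX R) ht
  rw [Derivation.leibniz, derivative_subst ha, derivative_X] at h
  rw [Derivation.leibniz, derivative_X, smul_eq_mul, smul_eq_mul, mul_one, subst_add ha,
    subst_mul ha, subst_X ha]
  linear_combination h

end CommRing

section Field

variable {K : Type*} [Field K]

protected theorem inv_pow (f : K⟦X⟧) (n : ℕ) : (f ^ n)⁻¹ = f⁻¹ ^ n := by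
  induction n with
  | zero => simp
  | succ n ih => rw [pow_succ, PowerSeries.mul_inv_rev, ih, pow_succ']

theorem subst_inv {t : K⟦X⟧} (ht0 : constantCoeff t = 0) (f : K⟦X⟧) :
    f⁻¹.subst t = (f.subst t)⁻¹ := by
  have ha := HasSubst.of_constantCoeff_zero' ht0
  have hf := constantCoeff_subst_of_constantCoeff_eq_zero ht0 f
  by_cases h : constantCoeff f = 0
  · rw [inv_eq_zero.mpr h, inv_eq_zero.mpr (hf.trans h), ← coe_substAlgHom ha, map_zero]
  · rw [eq_inv_iff_mul_eq_one (hf ▸ h), ← subst_mul ha, PowerSeries.inv_mul_cancel f h,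
      ← coe_substAlgHom ha, map_one]

theorem coeff_derivative_mul_inv_pow (H v : K⟦X⟧) (n : ℕ) :
    coeff n (d⁄dX K H * v⁻¹ ^ (n + 1)) =
      (n + 1) * coeff (n + 1) (H * d⁄dX K (X * v) * v⁻¹ ^ (n + 2)) := by
  by_cases hv : constantCoeff v = 0
  · simp [inv_eq_zero.mpr hv]
  set w := v⁻¹
  have hvw : v * w = 1 := PowerSeries.mul_inv_cancel v hv
  have hprod : d⁄dX K H * w ^ (n + 1) =
      d⁄dX K (H * w ^ (n + 1)) + C (n + 1 : K) * (H * w ^ (n + 2) * d⁄dX K v) := by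
    simp only [Derivation.leibniz, Derivation.leibniz_pow, derivative_inv', smul_eq_mul,
      nsmul_eq_mul, w, Nat.add_sub_cancel, map_add, map_one, map_natCast]
    push_cast
    ring
  have hexpand : H * d⁄dX K (X * v) * w ^ (n + 2) =
      H * w ^ (n + 1) + X * (H * w ^ (n + 2) * d⁄dX K v) := by
    simp only [Derivation.leibniz, derivative_X, smul_eq_mul]
    linear_combination (H * w ^ (n + 1)) * hvw
  rw [hexpand, hprod, LinearMap.map_add, LinearMap.map_add, coeff_succ_X_mul, coeff_derivative,
    coeff_C_mul]
  ring

theorem coeff_subst_of_mul_subst_eq_X [CharZero K] {t v : K⟦X⟧} (ht0 : constantCoeff t = 0)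
    (ht : t * v.subst t = X) (H : K⟦X⟧) (n : ℕ) :
    coeff n (H.subst t) = coeff n (H * d⁄dX K (X * v) * v⁻¹ ^ (n + 1)) := by
  have ha := HasSubst.of_constantCoeff_zero' ht0
  have hinv := derivative_mul_subst_derivative_eq_one ht0 ht
  set u' := d⁄dX K (X * v)
  have hu' : constantCoeff u' = constantCoeff v := by
    rw [← coeff_zero_eq_constantCoeff_apply, coeff_derivative, zero_add, coeff_succ_X_mul,
      coeff_zero_eq_constantCoeff_apply, Nat.cast_zero, zero_add, mul_one]
  have hu'0 : constantCoeff u' ≠ 0 := by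
    have := congrArg constantCoeff hinv
    rw [map_mul, constantCoeff_subst_of_constantCoeff_eq_zero ht0, map_one] at this
    exact right_ne_zero_of_mul_eq_one this
  have hdt : d⁄dX K t = u'⁻¹.subst t := by
    rw [subst_inv ht0, eq_inv_iff_mul_eq_one
      (by rwa [constantCoeff_subst_of_constantCoeff_eq_zero ht0]), hinv]
  induction n generalizing H with
  | zero =>
    simp only [coeff_zero_eq_constantCoeff_apply, map_mul, constantCoeff_inv,
      constantCoeff_subst_of_constantCoeff_eq_zero ht0, hu', zero_add, pow_one]
    field_simp [hu' ▸ hu'0]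
  | succ n ih =>
    have hstep := ih (d⁄dX K H * u'⁻¹)
    rw [subst_mul ha, ← hdt, ← derivative_subst ha, coeff_derivative, mul_assoc _ u'⁻¹,
      PowerSeries.inv_mul_cancel u' hu'0, mul_one, coeff_derivative_mul_inv_pow] at hstep
    exact mul_left_cancel₀ (Nat.cast_add_one_ne_zero n) (by linear_combination hstep)

theorem inv_one_sub_C_mul_X (a : K) : (1 - C a * X)⁻¹ = mk (a ^ ·) := by
  have h := congrArg (rescale a) (mk_one_mul_one_sub_eq_one K)
  rw [map_mul, rescale_mk, map_sub, map_one, rescale_X] at h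
  simp only [Pi.one_apply, mul_one] at h
  rw [inv_eq_iff_mul_eq_one (by simp), h]

theorem inv_one_sub_X_pow_succ (d : ℕ) :
    ((1 - X : K⟦X⟧) ^ (d + 1))⁻¹ = mk fun j ↦ ((d + j).choose d : K) := by
  rw [inv_eq_iff_mul_eq_one (by simp), mk_add_choose_mul_one_sub_pow_eq_one]

theorem coeff_succ_one_add_C_mul_X_mul (a : K) (f : K⟦X⟧) (j : ℕ) :
    coeff (j + 1) ((1 + C a * X) * f) = coeff (j + 1) f + a * coeff j f := by
  rw [add_mul, one_mul, map_add, mul_assoc, coeff_C_mul, coeff_succ_X_mul]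

end Field

end PowerSeries

section AreaSeries

variable {K : Type*} [Field K]

theorem X_mul_one_add_three_X_mul_inv_mul_derivative (n : ℕ) :
    X * (1 + 3 * X) * ((1 - X) * (1 - 3 * X) ^ 2)⁻¹ * d⁄dX K (X * (1 - X) ^ 2) *
        ((1 - X) ^ 2)⁻¹ ^ (n + 1) =
      X * ((1 + 3 * X) * ((1 - 3 * X) * (1 - X) ^ (2 * n + 2))⁻¹ : K⟦X⟧) := by
  have ha : (1 - X : K⟦X⟧) * (1 - X)⁻¹ = 1 := PowerSeries.mul_inv_cancel _ (by simp)
  have hb : (1 - 3 * X : K⟦X⟧) * (1 - 3 * X)⁻¹ = 1 := PowerSeries.mul_inv_cancel _ (by simp)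
  have hderiv : d⁄dX K (X * (1 - X) ^ 2) = (1 - X) * (1 - 3 * X) := by
    simp only [Derivation.leibniz, Derivation.leibniz_pow, derivative_X, map_sub,
      Derivation.map_one_eq_zero, smul_eq_mul, nsmul_eq_mul]
    ring
  simp only [hderiv, PowerSeries.mul_inv_rev, PowerSeries.inv_pow]
  linear_combination (X * (1 + 3 * X) * (1 - X)⁻¹ ^ (2 * n + 2) * (1 - 3 * X)⁻¹) *
    ((1 - 3 * X) * (1 - 3 * X)⁻¹ * ha + hb)

theorem coeff_pred_one_add_three_X_mul_inv (n : ℕ) (hn : 1 ≤ n) :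
    coeff (n - 1) ((1 + 3 * X) * ((1 - 3 * X) * (1 - X) ^ (2 * n + 2))⁻¹ : K⟦X⟧) =
      ∑ k ∈ Finset.range n, (3 : K) ^ k * (((3 * n - k).choose (n - 1 - k) : K) +
        3 * (if k + 2 ≤ n then ((3 * n - 1 - k).choose (n - 2 - k) : K) else 0)) := by
  obtain ⟨m, rfl⟩ : ∃ m, n = m + 1 := ⟨n - 1, by omega⟩
  have hsplit : ((1 + 3 * X) * ((1 - 3 * X) * (1 - X) ^ (2 * (m + 1) + 2))⁻¹ : K⟦X⟧) =
      mk (3 ^ ·) * ((1 + C 3 * X) * mk fun j ↦ ((2 * m + 3 + j).choose (2 * m + 3) : K)) := by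
    rw [PowerSeries.mul_inv_rev, show 2 * (m + 1) + 2 = 2 * m + 3 + 1 by ring,
      inv_one_sub_X_pow_succ, ← inv_one_sub_C_mul_X, map_ofNat]
    ring
  rw [Nat.add_sub_cancel, hsplit, coeff_mul, Finset.Nat.sum_antidiagonal_eq_sum_range_succ_mk]
  refine Finset.sum_congr rfl fun k hk => ?_
  rw [coeff_mk]
  congr 1
  rcases Nat.eq_zero_or_pos (m - k) with hlast | hpos
  · obtain rfl : k = m := by simp only [Finset.mem_range] at hk; omega
    simp
  · obtain ⟨j, hj⟩ : ∃ j, m - k = j + 1 := ⟨m - k - 1, by omega⟩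
    rw [hj, coeff_succ_one_add_C_mul_X_mul, coeff_mk, coeff_mk, if_pos (by omega),
      show 3 * (m + 1) - k = 2 * m + 3 + (j + 1) by omega,
      show 3 * (m + 1) - 1 - k = 2 * m + 3 + j by omega, show m + 1 - 2 - k = j by omega,
      Nat.choose_symm_add, Nat.choose_symm_add]

end AreaSeries

/-- With t = t(x) the power series solution of t(1-t)² = x,
t(0) = 0, for n ≥ 1:
[xⁿ] t(1+3t)/((1-t)(1-3t)²) = [t^{n-1}] (1+3t)/((1-3t)(1-t)^{2n+2})
  = Σ_{k≥0} 3ᵏ(C(3n-k, n-1-k) + 3 C(3n-1-k, n-2-k))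
(binomials vanishing for negative lower index, so only k < n contributes). -/
theorem area_coefficient_extraction (t : PowerSeries ℚ)
    (ht : t * (1 - t) ^ 2 = PowerSeries.X)
    (ht0 : PowerSeries.constantCoeff t = 0) (n : ℕ) (hn : 1 ≤ n) :
    PowerSeries.coeff n (t * (1 + 3 * t) * ((1 - t) * (1 - 3 * t) ^ 2)⁻¹) =
        PowerSeries.coeff (n - 1)
          ((1 + 3 * PowerSeries.X) *
            ((1 - 3 * PowerSeries.X) * (1 - PowerSeries.X) ^ (2 * n + 2))⁻¹) ∧
      PowerSeries.coeff n (t * (1 + 3 * t) * ((1 - t) * (1 - 3 * t) ^ 2)⁻¹) =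
        ∑ k ∈ Finset.range n,
          (3 : ℚ) ^ k * (((3 * n - k).choose (n - 1 - k) : ℚ) +
            3 * (if k + 2 ≤ n then ((3 * n - 1 - k).choose (n - 2 - k) : ℚ) else 0)) := by
  have ha := HasSubst.of_constantCoeff_zero' ht0
  have hsq : t * ((1 - X) ^ 2 : ℚ⟦X⟧).subst t = X := by
    rwa [← coe_substAlgHom ha, map_pow, map_sub, map_one, substAlgHom_X]
  have hsubst : t * (1 + 3 * t) * ((1 - t) * (1 - 3 * t) ^ 2)⁻¹ =
      (X * (1 + 3 * X) * ((1 - X) * (1 - 3 * X) ^ 2)⁻¹ : ℚ⟦X⟧).subst t := by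
    rw [subst_mul ha, subst_inv ht0, ← coe_substAlgHom ha]
    simp [substAlgHom_X, map_ofNat (substAlgHom ha) 3]
  obtain ⟨m, rfl⟩ : ∃ m, n = m + 1 := ⟨n - 1, by omega⟩
  have hlagrange : coeff (m + 1) (t * (1 + 3 * t) * ((1 - t) * (1 - 3 * t) ^ 2)⁻¹) =
      coeff (m + 1 - 1)
        ((1 + 3 * X) * ((1 - 3 * X) * (1 - X) ^ (2 * (m + 1) + 2))⁻¹ : ℚ⟦X⟧) := by
    rw [hsubst, coeff_subst_of_mul_subst_eq_X ht0 hsq, X_mul_one_add_three_X_mul_inv_mul_derivative,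
      coeff_succ_X_mul, Nat.add_sub_cancel]
  exact ⟨hlagrange, hlagrange.trans (coeff_pred_one_add_three_X_mul_inv (m + 1) hn)⟩
end

section
/- Define the sequence d_m (polynomials in z) by d_0 = 1, d_1 = 1, d_2 = 1 - z^2, d_m = d_{m-1} - z^2 d_{m-3}. Let a_{n,k}^{(h)} count Deutsch paths of length n ending at level k that stay within 0 ≤ level ≤ h. Then the generating function f_k^{(h)}(z) = Σ_n a_{n,k}^{(h)} z^n equals z^k · d_{h-k} / d_{h+1}, for 0 ≤ k ≤ h. -/
/-- Number of Deutsch paths from (0,0) to (n,k) staying within 0 ≤ height ≤ h. -/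
noncomputable def deutschCountBounded (h n k : ℕ) : ℕ :=
  Nat.card {p : List ℤ // p.length = n ∧ IsDeutschPath p ∧
    (∀ m : ℕ, (p.take m).sum ≤ (h : ℤ)) ∧ p.sum = (k : ℤ)}

/-!
Splitting off the last step of a path bounded by `h` gives the linear system
`f_k = [k = 0] + z (f_{k-1} + ∑_j f_{k+2j+1})` for `0 ≤ k ≤ h` (with `f_k = 0` outside).
Unrolling the recursion of `d` to `d_m = d_{m+1} + ∑_j z^{2j+2} d_{m-2j-1}` shows that
`g_k = z^k d_{h-k}` solves the same system with right-hand side `[k = 0] d_{h+1}`.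
Hence `f_k d_{h+1} - g_k` solves the homogeneous system `w = z · (…)`, whose only
power-series solution is `0`.
-/
open PowerSeries

theorem PowerSeries.eq_zero_of_forall_eq_X_mul_sum {R ι κ : Type*} [Semiring R] {W : ι → R⟦X⟧}
    (hW : ∀ i, ∃ (t : Finset κ) (g : κ → ι), W i = X * ∑ j ∈ t, W (g j)) (i : ι) : W i = 0 := by
  ext n
  obtain ⟨t, g, hi⟩ := hW i
  induction n generalizing i t g with
  | zero => simp [hi]
  | succ n ih =>
    rw [hi, coeff_succ_X_mul, map_sum, map_zero]
    exact Finset.sum_eq_zero fun j _ => by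
      obtain ⟨t', g', h'⟩ := hW (g j)
      exact ih (g j) t' g' h'

theorem eq_succ_add_sum_of_recurrence {A : Type*} [CommRing A] {x : A} {d : ℕ → A}
    (h01 : d 1 = d 0) (h12 : d 2 = d 1 - x ^ 2 * d 0)
    (hrec : ∀ m, d (m + 3) = d (m + 2) - x ^ 2 * d m) (m : ℕ) :
    d m = d (m + 1) + ∑ j ∈ Finset.range ((m + 1) / 2), x ^ (2 * j + 2) * d (m - (2 * j + 1)) := by
  induction m using Nat.strong_induction_on with
  | _ m ih =>
    match m with
    | 0 => simp [h01]
    | 1 => simp [h12]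
    | m + 2 =>
      have hshift : ∑ j ∈ Finset.range ((m + 1) / 2),
          x ^ (2 * (j + 1) + 2) * d (m + 2 - (2 * (j + 1) + 1)) = x ^ 2 * (d m - d (m + 1)) := by
        rw [sub_eq_of_eq_add' (ih m (by omega)), Finset.mul_sum]
        refine Finset.sum_congr rfl fun j _ => ?_
        rw [show m + 2 - (2 * (j + 1) + 1) = m - (2 * j + 1) by omega]
        ring
      rw [show (m + 2 + 1) / 2 = (m + 1) / 2 + 1 by omega, Finset.sum_range_succ', hshift, hrec,
        show m + 2 - (2 * 0 + 1) = m + 1 by omega]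
      ring

theorem List.forall_sum_take_append_singleton {M : Type*} [AddMonoid M] (P : M → Prop)
    (l : List M) (a : M) :
    (∀ m, P ((l ++ [a]).take m).sum) ↔ (∀ m, P (l.take m).sum) ∧ P (l.sum + a) := by
  constructor
  · intro H
    refine ⟨fun m => ?_, by simpa using H (l.length + 1)⟩
    rcases le_total m l.length with hm | hm
    · simpa [List.take_append_of_le_length hm] using H m
    · simpa [List.take_of_length_le hm] using H l.length
  · rintro ⟨H, Ha⟩ m
    rcases le_or_gt m l.length with hm | hm
    · simpa [List.take_append_of_le_length hm] using H m
    · simpa [List.take_of_length_le (by simp; omega : (l ++ [a]).length ≤ m)] using Ha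

def boundedDeutschPaths (h n : ℕ) (k : ℤ) : Set (List ℤ) :=
  {p | p.length = n ∧ IsDeutschPath p ∧ (∀ m : ℕ, (p.take m).sum ≤ (h : ℤ)) ∧ p.sum = k}

-- Down-steps longer than `h` are included harmlessly: no path bounded by `h` takes them.
def deutschSteps (h : ℕ) : Finset ℤ :=
  insert 1 ((Finset.range h).image fun j : ℕ => -(2 * (j : ℤ) + 1))

theorem sum_deutschSteps {M : Type*} [AddCommMonoid M] (h : ℕ) (g : ℤ → M) :
    ∑ s ∈ deutschSteps h, g s = g 1 + ∑ j ∈ Finset.range h, g (-(2 * j + 1)) := by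
  rw [deutschSteps, Finset.sum_insert (by simp; omega), Finset.sum_image (by simp)]

theorem deutschStep_of_mem_deutschSteps {h : ℕ} {s : ℤ} (hs : s ∈ deutschSteps h) :
    DeutschStep s := by
  simp only [deutschSteps, Finset.mem_insert, Finset.mem_image, Finset.mem_range] at hs
  rcases hs with rfl | ⟨j, -, rfl⟩
  exacts [Or.inl rfl, Or.inr ⟨j, rfl⟩]

theorem mem_deutschSteps_of_deutschStep {h : ℕ} {s : ℤ} (hs : DeutschStep s) (hsh : -s ≤ h) :
    s ∈ deutschSteps h := by
  simp only [deutschSteps, Finset.mem_insert, Finset.mem_image, Finset.mem_range]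
  rcases hs with rfl | ⟨j, rfl⟩
  exacts [Or.inl rfl, Or.inr ⟨j, by omega, rfl⟩]

section BoundedDeutschPaths

variable {h n : ℕ} {k : ℤ}

theorem bounds_of_mem_boundedDeutschPaths {p : List ℤ} (hp : p ∈ boundedDeutschPaths h n k) :
    0 ≤ k ∧ k ≤ h := by
  obtain ⟨-, ⟨-, hnn⟩, hle, rfl⟩ := hp
  simpa using And.intro (hnn p.length) (hle p.length)

theorem boundedDeutschPaths_zero :
    boundedDeutschPaths h 0 k = {p | p = [] ∧ k = 0} := by
  ext p
  simp only [boundedDeutschPaths, IsDeutschPath, Set.mem_ofPred_eq, List.length_eq_zero_iff]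
  constructor
  · rintro ⟨rfl, -, -, hk⟩
    simpa [eq_comm] using hk
  · rintro ⟨rfl, rfl⟩
    simp

theorem append_singleton_mem_boundedDeutschPaths_iff {q : List ℤ} {s : ℤ} :
    q ++ [s] ∈ boundedDeutschPaths h (n + 1) k ↔
      DeutschStep s ∧ 0 ≤ k ∧ k ≤ h ∧ q ∈ boundedDeutschPaths h n (k - s) := by
  have hnn := List.forall_sum_take_append_singleton (fun x : ℤ => 0 ≤ x) q s
  have hle := List.forall_sum_take_append_singleton (fun x : ℤ => x ≤ h) q s
  simp only [boundedDeutschPaths, IsDeutschPath, Set.mem_ofPred_eq, List.length_append,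
    List.length_singleton, List.forall_mem_append, List.forall_mem_singleton, List.sum_append,
    List.sum_singleton, hnn, hle]
  constructor
  · rintro ⟨hn, ⟨⟨hq, hs⟩, hnq, hnk⟩, ⟨hlq, hlk⟩, hk⟩
    exact ⟨hs, by omega, by omega, by omega, ⟨hq, hnq⟩, hlq, by omega⟩
  · rintro ⟨hs, hk0, hkh, hn, ⟨hq, hnq⟩, hlq, hk⟩
    exact ⟨by omega, ⟨⟨hq, hs⟩, hnq, by omega⟩, ⟨hlq, by omega⟩, by omega⟩

theorem bijective_append_singleton_boundedDeutschPaths (hk0 : 0 ≤ k) (hkh : k ≤ h) :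
    Function.Bijective fun x : Σ s : deutschSteps h, boundedDeutschPaths h n (k - s) =>
      (⟨x.2.1 ++ [x.1.1], append_singleton_mem_boundedDeutschPaths_iff.2
        ⟨deutschStep_of_mem_deutschSteps x.1.2, hk0, hkh, x.2.2⟩⟩ :
        boundedDeutschPaths h (n + 1) k) := by
  constructor
  · intro x y hxy
    obtain ⟨hq, hs⟩ := List.append_inj' (congrArg Subtype.val hxy) rfl
    exact Sigma.subtype_ext (Subtype.ext (List.singleton_inj.1 hs)) hq
  · rintro ⟨p, hp⟩
    obtain ⟨q, s, rfl⟩ := (p.eq_nil_or_concat').resolve_left fun hnil => by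
      simpa [hnil, boundedDeutschPaths] using hp.1
    obtain ⟨hs, -, -, hq⟩ := append_singleton_mem_boundedDeutschPaths_iff.1 hp
    have hsh : -s ≤ h := by have := (bounds_of_mem_boundedDeutschPaths hq); omega
    exact ⟨⟨⟨s, mem_deutschSteps_of_deutschStep hs hsh⟩, ⟨q, hq⟩⟩, rfl⟩

theorem finite_boundedDeutschPaths (h n : ℕ) (k : ℤ) : (boundedDeutschPaths h n k).Finite := by
  induction n generalizing k with
  | zero =>
    rw [boundedDeutschPaths_zero]
    exact (Set.finite_singleton []).subset fun p hp => hp.1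
  | succ n ih =>
    by_cases hk : 0 ≤ k ∧ k ≤ h
    · have : ∀ s : deutschSteps h, Finite (boundedDeutschPaths h n (k - s)) := fun s => ih _
      exact Set.finite_coe_iff.1
        (Finite.of_surjective _ (bijective_append_singleton_boundedDeutschPaths hk.1 hk.2).2)
    · exact Set.finite_empty.subset fun p hp => hk (bounds_of_mem_boundedDeutschPaths hp)

theorem card_boundedDeutschPaths_succ (hk0 : 0 ≤ k) (hkh : k ≤ h) :
    Nat.card (boundedDeutschPaths h (n + 1) k) =
      ∑ s ∈ deutschSteps h, Nat.card (boundedDeutschPaths h n (k - s)) := by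
  have : ∀ s : deutschSteps h, Finite (boundedDeutschPaths h n (k - s)) :=
    fun s => finite_boundedDeutschPaths h n _
  rw [← Nat.card_eq_of_bijective _ (bijective_append_singleton_boundedDeutschPaths hk0 hkh),
    Nat.card_sigma]
  exact Finset.sum_coe_sort (deutschSteps h) fun s => Nat.card (boundedDeutschPaths h n (k - s))

end BoundedDeutschPaths

noncomputable def boundedDeutschPathsGF (R : Type*) [Semiring R] (h : ℕ) (k : ℤ) : R⟦X⟧ :=
  mk fun n => (Nat.card (boundedDeutschPaths h n k) : R)

theorem boundedDeutschPathsGF_eq_zero {R : Type*} [Semiring R] {h : ℕ} {k : ℤ}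
    (hk : ¬(0 ≤ k ∧ k ≤ h)) : boundedDeutschPathsGF R h k = 0 := by
  ext n
  have : boundedDeutschPaths h n k = ∅ :=
    Set.eq_empty_of_forall_notMem fun p hp => hk (bounds_of_mem_boundedDeutschPaths hp)
  simp [boundedDeutschPathsGF, this]

theorem boundedDeutschPathsGF_eq {R : Type*} [Semiring R] {h : ℕ} {k : ℤ}
    (hk0 : 0 ≤ k) (hkh : k ≤ h) :
    boundedDeutschPathsGF R h k =
      (if k = 0 then 1 else 0) + X * ∑ s ∈ deutschSteps h, boundedDeutschPathsGF R h (k - s) := by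
  ext n
  cases n with
  | zero =>
    by_cases hk : k = 0 <;> simp [boundedDeutschPathsGF, boundedDeutschPaths_zero, hk]
  | succ n =>
    have hconst : coeff (n + 1) (if k = 0 then (1 : R⟦X⟧) else 0) = 0 := by split_ifs <;> simp
    rw [map_add, hconst, zero_add, coeff_succ_X_mul, map_sum]
    simp only [boundedDeutschPathsGF, coeff_mk, card_boundedDeutschPaths_succ hk0 hkh,
      Nat.cast_sum]

section Numerator

variable {A : Type*} [CommRing A] (x : A) (d : ℕ → A) (h : ℕ)

noncomputable def deutschNumerator (k : ℤ) : A :=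
  if 0 ≤ k ∧ k ≤ h then x ^ k.toNat * d (h - k.toNat) else 0

theorem deutschNumerator_natCast (K : ℕ) :
    deutschNumerator x d h K = if K ≤ h then x ^ K * d (h - K) else 0 := by
  simp [deutschNumerator]

theorem deutschNumerator_eq_zero {k : ℤ} (hk : ¬(0 ≤ k ∧ k ≤ h)) : deutschNumerator x d h k = 0 :=
  if_neg hk

theorem deutschNumerator_eq
    (hd : ∀ m, d m = d (m + 1) +
      ∑ j ∈ Finset.range ((m + 1) / 2), x ^ (2 * j + 2) * d (m - (2 * j + 1)))
    {k : ℤ} (hk0 : 0 ≤ k) (hkh : k ≤ h) :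
    deutschNumerator x d h k = (if k = 0 then d (h + 1) else 0) +
      x * ∑ s ∈ deutschSteps h, deutschNumerator x d h (k - s) := by
  lift k to ℕ using hk0 with K
  have hKh : K ≤ h := by exact_mod_cast hkh
  have hdown : (if (K : ℤ) = 0 then d (h + 1) else 0) + x * deutschNumerator x d h (K - 1) =
      x ^ K * d (h - K + 1) := by
    rcases K with _ | K
    · simp [deutschNumerator]
    · rw [show ((K + 1 : ℕ) : ℤ) - 1 = K by push_cast; ring, deutschNumerator_natCast,
        if_pos (by omega : K ≤ h), if_neg (by omega), show h - K = h - (K + 1) + 1 by omega]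
      ring
  have hup : x * ∑ j ∈ Finset.range h, deutschNumerator x d h (K - -(2 * j + 1)) =
      x ^ K * ∑ j ∈ Finset.range ((h - K + 1) / 2), x ^ (2 * j + 2) * d (h - K - (2 * j + 1)) := by
    have hcast (j : ℕ) : (K : ℤ) - -(2 * j + 1) = ((K + (2 * j + 1) : ℕ) : ℤ) := by push_cast; ring
    simp only [hcast, deutschNumerator_natCast]
    rw [← Finset.sum_subset (Finset.range_subset_range.2 (by omega : (h - K + 1) / 2 ≤ h))
      fun j _ hj => if_neg (by simp at hj; omega), Finset.mul_sum, Finset.mul_sum]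
    refine Finset.sum_congr rfl fun j hj => ?_
    rw [if_pos (by simp at hj; omega), Nat.sub_sub]
    ring
  rw [deutschNumerator_natCast, if_pos hKh, sum_deutschSteps, mul_add, ← add_assoc, hdown, hup,
    ← mul_add, ← hd]

end Numerator

/-- With d₀ = 1, d₁ = 1, d₂ = 1 - z², dₘ = dₘ₋₁ - z²dₘ₋₃, the
generating function of Deutsch paths bounded by h and ending at level k (0 ≤ k ≤ h)
is zᵏ·d_{h-k}/d_{h+1}; equivalently f_k⁽ʰ⁾ · d_{h+1} = zᵏ · d_{h-k}. -/
theorem deutschCountBounded_generating_function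
    (d : ℕ → PowerSeries ℚ) (h0 : d 0 = 1) (h1 : d 1 = 1)
    (h2 : d 2 = 1 - PowerSeries.X ^ 2)
    (hrec : ∀ m, 3 ≤ m → d m = d (m - 1) - PowerSeries.X ^ 2 * d (m - 3))
    (h k : ℕ) (hk : k ≤ h) :
    (PowerSeries.mk fun n => (deutschCountBounded h n k : ℚ)) * d (h + 1) =
      PowerSeries.X ^ k * d (h - k) := by
  have hd := eq_succ_add_sum_of_recurrence (x := (X : ℚ⟦X⟧)) (d := d) (by rw [h0, h1])
    (by rw [h0, h1, h2]; ring) fun m => by simpa using hrec (m + 3) (by omega)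
  have herror := eq_zero_of_forall_eq_X_mul_sum (W := fun l : ℤ =>
      boundedDeutschPathsGF ℚ h l * d (h + 1) - deutschNumerator X d h l) fun l => by
    by_cases hl : 0 ≤ l ∧ l ≤ h
    · refine ⟨deutschSteps h, (l - ·), ?_⟩
      rw [boundedDeutschPathsGF_eq hl.1 hl.2, deutschNumerator_eq X d h hd hl.1 hl.2]
      split_ifs <;> simp only [add_mul, one_mul, zero_mul, mul_sub, Finset.sum_sub_distrib,
        Finset.mul_sum, Finset.sum_mul, mul_assoc] <;> abel
    · exact ⟨∅, id, by simp [boundedDeutschPathsGF_eq_zero hl, deutschNumerator_eq_zero X d h hl]⟩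
  have hgf : (mk fun n => (deutschCountBounded h n k : ℚ)) = boundedDeutschPathsGF ℚ h k := rfl
  simpa [hgf, sub_eq_zero, deutschNumerator_natCast, hk] using herror k
end
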